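/- arXiv:1308.4629 — 2 statements merged into one kernel-verified Lean document; each statement's English description precedes it below -/
import Mathlib

section
/- (Quantum Recurrence Theorem, ℓ² model.) Let E : ℕ → ℝ be a sequence of real numbers and for t ∈ ℝ let U_t denote the time-evolution map on ℓ²(ℕ, ℂ) given by (U_t c)ₙ = exp(-i·Eₙ·t)·cₙ. Then for every c ∈ ℓ²(ℕ, ℂ), every δ > 0, and every τ > 0, there exists a time T > τ such that ‖c - U_T c‖ < δ. -/
/-!
Truncate `c` to a finitely supported `d` with `‖c - d‖ < δ / 3`. The finitely many phases
`exp (-i Eₙ m)`, `n < N`, are the powers of one element of the compact group `Circle ^ N`, so they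
return simultaneously close to `1` for arbitrarily large `m`; this makes `‖d - U_m d‖ ≤ δ / 3`.
As `U_m` is an isometry, `‖c - U_m c‖ ≤ ‖d - U_m d‖ + 2 ‖c - d‖ < δ`.
-/

open scoped ENNReal

/-- The time-evolution map `U_t` on `ℓ²(ℕ, ℂ)`: `(U_t c)ₙ = exp(-i·Eₙ·t)·cₙ`. -/
noncomputable def timeEvol (E : ℕ → ℝ) (t : ℝ) (c : lp (fun _ : ℕ => ℂ) 2) :
    lp (fun _ : ℕ => ℂ) 2 :=
  ⟨fun n => Complex.exp ((-(E n * t) : ℝ) * Complex.I) * (c : ∀ _ : ℕ, ℂ) n, by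
    apply memℓp_gen
    have hs : Summable fun n : ℕ => ‖(c : ∀ _ : ℕ, ℂ) n‖ ^ (2 : ℝ≥0∞).toReal :=
      (lp.memℓp c).summable (by norm_num)
    refine hs.congr fun n => ?_
    simp [norm_mul, Complex.norm_exp]⟩

open Filter Topology Finset Complex

theorem frequently_pow_mem_of_mem_nhds_one {G : Type*} [Group G] [TopologicalSpace G]
    [IsTopologicalGroup G] [CompactSpace G] (g : G) {U : Set G} (hU : U ∈ 𝓝 1) :
    ∃ᶠ m : ℕ in atTop, g ^ m ∈ U := by
  obtain ⟨h, -, hh⟩ := isCompact_univ.exists_mapClusterPt (u := fun m : ℕ => g ^ m)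
    (f := atTop) (by simp)
  obtain ⟨V, hV, hVU⟩ := exists_nhds_split_inv hU
  have hVh : {x | x * h⁻¹ ∈ V} ∈ 𝓝 h :=
    (continuous_id.mul continuous_const).continuousAt.preimage_mem_nhds (by simpa using hV)
  -- Two visits `k + a ≤ l` of the orbit near the cluster point `h` give
  -- `g ^ (l - k) = (g ^ l * h⁻¹) / (g ^ k * h⁻¹)` near `1`.
  have hvisit := hh.frequently hVh
  rw [frequently_atTop] at hvisit ⊢
  intro a
  obtain ⟨k, -, hk⟩ := hvisit 0
  obtain ⟨l, hl, hl'⟩ := hvisit (k + a)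
  refine ⟨l - k, by omega, ?_⟩
  have := hVU _ hl' _ hk
  rwa [mul_div_mul_right_eq_div, div_eq_mul_inv, ← pow_sub _ (by omega : k ≤ l)] at this

theorem frequently_forall_norm_exp_sub_one_lt {ι : Type*} (s : Finset ι) (a : ι → ℝ) {ε : ℝ}
    (hε : 0 < ε) : ∃ᶠ m : ℕ in atTop, ∀ i ∈ s, ‖exp (↑(a i * m) * I) - 1‖ < ε := by
  have hU : ∀ᶠ u in 𝓝 (1 : ι → Circle), ∀ i ∈ s, ‖(u i : ℂ) - 1‖ < ε :=
    s.eventually_all.2 fun i _ => by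
      have hcont : Continuous fun u : ι → Circle => (u i : ℂ) := by fun_prop
      simpa [dist_eq_norm] using
        (hcont.continuousAt (x := 1)).eventually (Metric.ball_mem_nhds _ hε)
  refine (frequently_pow_mem_of_mem_nhds_one (fun i => Circle.exp (a i)) hU).mono
    fun m hm i hi => ?_
  have h := hm i hi
  rw [Pi.pow_apply, Circle.coe_pow, Circle.coe_exp, ← exp_nat_mul] at h
  convert h using 4
  push_cast
  ring

theorem Isometry.dist_apply_self_le {α : Type*} [PseudoMetricSpace α] {f : α → α}
    (hf : Isometry f) (x y : α) : dist x (f x) ≤ dist y (f y) + 2 * dist x y := by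
  have := dist_triangle4 x y (f y) (f x)
  rw [hf.dist_eq, dist_comm y x] at this
  linarith

section

variable (E : ℕ → ℝ) (t : ℝ)

theorem timeEvol_apply (c : lp (fun _ : ℕ => ℂ) 2) (n : ℕ) :
    timeEvol E t c n = exp (↑(-(E n * t)) * I) * c n := rfl

theorem norm_timeEvol (c : lp (fun _ : ℕ => ℂ) 2) : ‖timeEvol E t c‖ = ‖c‖ := by
  simp only [lp.norm_eq_tsum_rpow (by norm_num : 0 < (2 : ℝ≥0∞).toReal), timeEvol_apply,
    norm_mul, norm_exp_ofReal_mul_I, one_mul]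

noncomputable def timeEvolₗᵢ : lp (fun _ : ℕ => ℂ) 2 →ₗᵢ[ℂ] lp (fun _ : ℕ => ℂ) 2 where
  toFun := timeEvol E t
  map_add' a b := by ext n; simp [timeEvol_apply, mul_add]
  map_smul' z a := by ext n; simp [timeEvol_apply]; ring
  norm_map' := norm_timeEvol E t

@[simp] theorem coe_timeEvolₗᵢ : ⇑(timeEvolₗᵢ E t) = timeEvol E t := rfl

theorem timeEvol_single (n : ℕ) (a : ℂ) :
    timeEvol E t (lp.single 2 n a) = lp.single 2 n (exp (↑(-(E n * t)) * I) * a) := by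
  ext k
  rcases eq_or_ne k n with rfl | hk
  · simp [timeEvol_apply]
  · simp [timeEvol_apply, Pi.single_eq_of_ne hk]

theorem isometry_timeEvol : Isometry (timeEvol E t) :=
  (timeEvolₗᵢ E t).isometry

theorem dist_sum_single_timeEvol_le {s : Finset ℕ} {a : ℕ → ℂ} {ε : ℝ}
    (hε : ∀ n ∈ s, ‖exp (↑(-(E n * t)) * I) - 1‖ ≤ ε) :
    dist (∑ n ∈ s, lp.single 2 n (a n)) (timeEvol E t (∑ n ∈ s, lp.single 2 n (a n))) ≤
      ε * ∑ n ∈ s, ‖a n‖ := by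
  rw [dist_eq_norm, ← coe_timeEvolₗᵢ, map_sum, ← sum_sub_distrib, mul_sum]
  refine (norm_sum_le _ _).trans (sum_le_sum fun n hn => ?_)
  rw [coe_timeEvolₗᵢ, timeEvol_single, ← lp.single_sub, lp.norm_single (by norm_num),
    ← one_sub_mul, norm_mul, norm_sub_rev]
  exact mul_le_mul_of_nonneg_right (hε n hn) (norm_nonneg _)

end

theorem quantum_recurrence_general (E : ℕ → ℝ) (c : lp (fun _ : ℕ => ℂ) 2) (δ τ : ℝ)
    (hδ : 0 < δ) :
    ∃ T : ℝ, T > τ ∧ ‖c - timeEvol E T c‖ < δ := by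
  obtain ⟨N, hN⟩ : ∃ N, dist (∑ n ∈ range N, lp.single 2 n (c n)) c < δ / 3 :=
    ((Metric.tendsto_atTop.1 (lp.hasSum_single ENNReal.ofNat_ne_top c).tendsto_sum_nat)
      (δ / 3) (by positivity)).imp fun N hN => hN N le_rfl
  set d := ∑ n ∈ range N, lp.single 2 n (c n)
  set S := ∑ n ∈ range N, ‖c n‖
  set ε := δ / 3 / (S + 1)
  have hS : 0 ≤ S := sum_nonneg fun n _ => norm_nonneg _
  have hεS : ε * S ≤ δ / 3 := by
    rw [div_mul_eq_mul_div, div_le_iff₀ (by positivity)]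
    nlinarith
  obtain ⟨m, hτm, hm⟩ : ∃ m : ℕ, τ < m ∧ ∀ n ∈ range N, ‖exp (↑(-E n * m) * I) - 1‖ < ε :=
    ((tendsto_natCast_atTop_atTop.eventually_gt_atTop τ).and_frequently
      (frequently_forall_norm_exp_sub_one_lt (range N) (-E) (by positivity))).exists
  refine ⟨m, hτm, ?_⟩
  have hd : dist d (timeEvol E m d) ≤ ε * S :=
    dist_sum_single_timeEvol_le E m fun n hn => by rw [← neg_mul]; exact (hm n hn).le
  calc ‖c - timeEvol E m c‖ = dist c (timeEvol E m c) := (dist_eq_norm _ _).symm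
    _ ≤ dist d (timeEvol E m d) + 2 * dist c d := (isometry_timeEvol E m).dist_apply_self_le c d
    _ < δ := by rw [dist_comm c d]; linarith

/-- Quantum Recurrence Theorem in the ℓ² model. -/
theorem quantum_recurrence (E : ℕ → ℝ) (c : lp (fun _ : ℕ => ℂ) 2) (δ τ : ℝ)
    (hδ : 0 < δ) (hτ : 0 < τ) :
    ∃ T : ℝ, T > τ ∧ ‖c - timeEvol E T c‖ < δ :=
  quantum_recurrence_general E c δ τ hδ
end

section
/- Let E : ℕ → ℝ be a sequence of real numbers and for t ∈ ℝ let U_t denote the time-evolution map on ℓ²(ℕ, ℂ) given by (U_t c)ₙ = exp(-i·Eₙ·t)·cₙ. Then for every c ∈ ℓ²(ℕ, ℂ), the norm closure of the forward orbit {U_s c : s ≥ 0} contains the full orbit {U_t c : t ∈ ℝ}. -/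
/-!
`U_t c` is the coordinatewise action on `c` of `γ t = (exp (-i Eₙ t))ₙ`, a one-parameter subgroup
of the compact group `ℕ → Circle`. In a compact group `1` is a cluster point of the powers
`(γ 1) ^ k` as `k → ∞`, so `γ t` is a cluster point of `γ (t + k)`. The action `θ ↦ θ • c` is
continuous from the product topology to the `ℓ²` norm by dominated convergence, hence `U_t c` is a
cluster point of `U_{t+k} c`, and `t + k ≥ 0` for large `k`.
-/

open scoped ENNReal

open Filter Topology

theorem AddChar.mapClusterPt_atTop {G : Type*} [Group G] [TopologicalSpace G] [CompactSpace G]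
    [IsTopologicalGroup G] (γ : AddChar ℝ G) (t : ℝ) : MapClusterPt (γ t) atTop γ := by
  have h := (mapClusterPt_one_atTop_pow (γ 1)).continuousAt_comp
    (continuous_const_mul (γ t)).continuousAt
  rw [mul_one] at h
  refine MapClusterPt.of_comp (φ := fun k : ℕ => t + k)
    (tendsto_atTop_add_const_left _ t tendsto_natCast_atTop_atTop) ?_
  convert h using 1
  ext k
  rw [Function.comp_apply, Function.comp_apply, ← AddChar.map_nsmul_eq_pow, nsmul_one,
    AddChar.map_add_eq_mul]

namespace lp

variable {α : Type*} {E : α → Type*} [∀ i, NormedAddCommGroup (E i)] [∀ i, NormedSpace ℂ (E i)]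
  {p : ℝ≥0∞}

def rotate (θ : α → Circle) (f : lp E p) : lp E p :=
  ⟨fun i => θ i • f i, (lp.memℓp f).norm.mono fun _ => (Circle.norm_smul _ _).le⟩

@[simp]
theorem coeFn_rotate (θ : α → Circle) (f : lp E p) : ⇑(rotate θ f) = fun i => θ i • f i := rfl

theorem continuous_rotate [Fact (1 ≤ p)] (hp : p ≠ ∞) (f : lp E p) :
    Continuous fun θ : α → Circle => rotate θ f := by
  have hp0 : 0 < p.toReal := ENNReal.toReal_pos (zero_lt_one.trans_le Fact.out).ne' hp
  rw [continuous_iff_continuousAt]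
  intro θ₀
  rw [ContinuousAt, tendsto_iff_norm_sub_tendsto_zero]
  simp_rw [lp.norm_eq_tsum_rpow hp0, coeFn_sub, coeFn_rotate, Pi.sub_apply]
  have hsum : Tendsto (fun θ : α → Circle => ∑' i, ‖θ i • f i - θ₀ i • f i‖ ^ p.toReal)
      (𝓝 θ₀) (𝓝 0) := by
    have := tendsto_tsum_of_dominated_convergence (𝓕 := 𝓝 θ₀)
      (f := fun (θ : α → Circle) i => ‖θ i • f i - θ₀ i • f i‖ ^ p.toReal) (g := 0)
      (bound := fun i => (2 * ‖f i‖) ^ p.toReal) ?_ ?_ ?_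
    · simpa using this
    · simp_rw [Real.mul_rpow zero_le_two (norm_nonneg _)]
      exact ((lp.memℓp f).summable hp0).mul_left _
    · intro i
      have hc : Continuous fun θ : α → Circle => ‖θ i • f i - θ₀ i • f i‖ ^ p.toReal :=
        (Real.continuous_rpow_const hp0.le).comp (by fun_prop)
      simpa [Real.zero_rpow hp0.ne'] using hc.tendsto θ₀
    · refine Eventually.of_forall fun θ i => ?_
      rw [Real.norm_of_nonneg (by positivity)]
      refine Real.rpow_le_rpow (norm_nonneg _) ?_ hp0.le
      calc ‖θ i • f i - θ₀ i • f i‖ ≤ ‖θ i • f i‖ + ‖θ₀ i • f i‖ := norm_sub_le _ _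
        _ = 2 * ‖f i‖ := by rw [Circle.norm_smul, Circle.norm_smul, two_mul]
  have := hsum.rpow_const (p := 1 / p.toReal) (Or.inr (by positivity))
  rwa [Real.zero_rpow (by positivity)] at this

end lp

noncomputable def phaseChar {α : Type*} (E : α → ℝ) : AddChar ℝ (α → Circle) where
  toFun t i := Circle.exp (-(E i * t))
  map_zero_eq_one' := by funext i; simp only [mul_zero, neg_zero, Circle.exp_zero, Pi.one_apply]
  map_add_eq_mul' s t := by funext i; simp only [mul_add, neg_add, Circle.exp_add, Pi.mul_apply]

theorem timeEvol_eq_rotate_phaseChar (E : ℕ → ℝ) (t : ℝ) (c : lp (fun _ : ℕ => ℂ) 2) :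
    timeEvol E t c = lp.rotate (phaseChar E t) c := by
  ext n
  simp only [timeEvol, lp.coeFn_rotate, phaseChar, AddChar.coe_mk, Circle.smul_def,
    Circle.coe_exp, smul_eq_mul]

/-- the closure of the forward orbit contains the full orbit. -/
theorem full_orbit_subset_closure_forward_orbit (E : ℕ → ℝ)
    (c : lp (fun _ : ℕ => ℂ) 2) :
    {x | ∃ t : ℝ, x = timeEvol E t c} ⊆
      closure {x | ∃ s : ℝ, 0 ≤ s ∧ x = timeEvol E s c} := by
  rintro _ ⟨t, rfl⟩
  have hU : MapClusterPt (timeEvol E t c) atTop (timeEvol E · c) := by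
    simpa only [Function.comp_def, ← timeEvol_eq_rotate_phaseChar] using
      ((phaseChar E).mapClusterPt_atTop t).continuousAt_comp
        (lp.continuous_rotate ENNReal.ofNat_ne_top c).continuousAt
  refine closure_mono ?_ (mapClusterPt_atTop_iff_forall_mem_closure.1 hU 0)
  rintro _ ⟨s, hs, rfl⟩
  exact ⟨s, hs, rfl⟩
end
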